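/- arXiv:1112.5645 — 2 statements merged into one kernel-verified Lean document; each statement's English description precedes it below -/
import Mathlib

section
/- Let p and q be distinct primes with q ≡ 1 (mod 4) and with p a quadratic residue modulo q, and let N be a square-free positive integer dividing (q−1)/4 and coprime to p. In the quaternion algebra (p,q/ℚ), the ℤ-submodule spanned by the four elements 1, N·I, (1+J)/2, and (I+K)/2 is closed under multiplication and contains 1, hence is a subring; moreover it is a free ℤ-module of rank 4 whose ℚ-span is all of (p,q/ℚ) (i.e. it is an order of (p,q/ℚ)). -/
open Quaternion Submodule

/-!
Write `ω = (1 + j)/2`, so that `ω² = ω + (q - 1)/4`, and `i ω = (i + k)/2`. With `q = 4 N k + 1`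
the sixteen products of the generators `1, N i, ω, i ω` are integral combinations of them (for
instance `ω · i ω = -k · N i`), so their `ℤ`-span is a ring. Being a `ℚ`-basis of `(p,q/ℚ)`, the
generators are also a `ℤ`-basis of their span, which therefore is a lattice of full rank.
-/

theorem Submodule.mul_mem_span_of_forall_mul_mem {R A : Type*} [CommSemiring R] [Semiring A]
    [Algebra R A] {S : Set A} (hS : ∀ x ∈ S, ∀ y ∈ S, x * y ∈ span R S) {x y : A}
    (hx : x ∈ span R S) (hy : y ∈ span R S) : x * y ∈ span R S := by
  have hle : span R S * span R S ≤ span R S := by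
    rw [span_mul_span, span_le]
    rintro _ ⟨x, hx, y, hy, rfl⟩
    exact hS x hx y hy
  exact hle (mul_mem_mul hx hy)

theorem Module.Basis.order_span_int_of_mul_eq_sum {A ι : Type*} [Ring A] [Algebra ℚ A]
    [Fintype ι] (v : Module.Basis ι ℚ A) (h1 : (1 : A) ∈ span ℤ (Set.range v))
    (c : ι → ι → ι → ℤ) (hmul : ∀ i j, v i * v j = ∑ l, c i j l • v l) :
    (1 : A) ∈ span ℤ (Set.range v) ∧
      (∀ x ∈ span ℤ (Set.range v), ∀ y ∈ span ℤ (Set.range v),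
        x * y ∈ span ℤ (Set.range v)) ∧
      Module.Free ℤ (span ℤ (Set.range v)) ∧
      Module.finrank ℤ (span ℤ (Set.range v)) = Fintype.card ι ∧
      span ℚ (span ℤ (Set.range v) : Set A) = ⊤ := by
  have hli : LinearIndependent ℤ v := v.linearIndependent.restrict_scalars' ℤ
  refine ⟨h1, fun x hx y hy => mul_mem_span_of_forall_mul_mem ?_ hx hy,
    .of_basis (.span hli), finrank_span_eq_card hli, by rw [span_span_of_tower, v.span_eq]⟩
  rintro _ ⟨i, rfl⟩ _ ⟨j, rfl⟩
  exact (mem_span_range_iff_exists_fun ℤ).2 ⟨c i j, (hmul i j).symm⟩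

namespace QuaternionAlgebra

def eichlerGens (a b : ℚ) (N : ℕ) : Fin 4 → ℍ[ℚ, a, b] :=
  ![1, ⟨0, N, 0, 0⟩, ⟨1/2, 0, 1/2, 0⟩, ⟨0, 1/2, 0, 1/2⟩]

def eichlerStructConst (N : ℕ) (n k : ℤ) : Fin 4 → Fin 4 → Fin 4 → ℤ :=
  ![![![1, 0, 0, 0], ![0, 1, 0, 0], ![0, 0, 1, 0], ![0, 0, 0, 1]],
    ![![0, 1, 0, 0], ![N ^ 2 * n, 0, 0, 0], ![0, 0, 0, N], ![0, 0, N * n, 0]],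
    ![![0, 0, 1, 0], ![0, 1, 0, -N], ![N * k, 0, 1, 0], ![0, -k, 0, 0]],
    ![![0, 0, 0, 1], ![N * n, 0, -(N * n), 0], ![0, k, 0, 1], ![-(n * N * k), 0, 0, 0]]]

variable {a b : ℚ} {N : ℕ}

theorem range_eichlerGens :
    Set.range (eichlerGens a b N) =
      {1, ⟨0, (N : ℚ), 0, 0⟩, ⟨1/2, 0, 1/2, 0⟩, ⟨0, 1/2, 0, 1/2⟩} := by
  ext
  simp [eichlerGens]
  tauto

theorem top_le_span_eichlerGens (hN : N ≠ 0) :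
    ⊤ ≤ span ℚ (Set.range (eichlerGens a b N)) := by
  rintro x -
  refine (mem_span_range_iff_exists_fun ℚ).2
    ⟨![x.re - x.imJ, (x.imI - x.imK) / N, 2 * x.imJ, 2 * x.imK], ?_⟩
  ext <;> simp [eichlerGens, Fin.sum_univ_four] <;> field_simp <;> ring

theorem eichlerGens_mul {n k : ℤ} (ha : a = n) (hb : b = 4 * N * k + 1) (i j : Fin 4) :
    eichlerGens a b N i * eichlerGens a b N j =
      ∑ l, eichlerStructConst N n k i j l • eichlerGens a b N l := by
  subst ha hb
  fin_cases i <;> fin_cases j <;> ext <;>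
    simp [eichlerGens, eichlerStructConst, Fin.sum_univ_four, ← Int.cast_smul_eq_zsmul ℚ] <;>
    ring

variable (a b) in
noncomputable def eichlerBasis (hN : N ≠ 0) : Module.Basis (Fin 4) ℚ ℍ[ℚ, a, b] :=
  basisOfTopLeSpanOfCardEqFinrank _ (top_le_span_eichlerGens hN) (by simp [finrank_eq_four])

theorem coe_eichlerBasis (hN : N ≠ 0) : ⇑(eichlerBasis a b hN) = eichlerGens a b N :=
  coe_basisOfTopLeSpanOfCardEqFinrank ..

theorem one_mem_span_eichlerGens : (1 : ℍ[ℚ, a, b]) ∈ span ℤ (Set.range (eichlerGens a b N)) :=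
  subset_span ⟨0, rfl⟩

end QuaternionAlgebra

theorem eichler_order_discriminant_pq_general (p q : ℕ)
    (hq4 : q % 4 = 1)
    (N : ℕ) (hN : 0 < N) (hdvd : N ∣ (q - 1) / 4) :
    ∀ M : Submodule ℤ ℍ[ℚ, (p : ℚ), (q : ℚ)],
      M = Submodule.span ℤ
        ({1, ⟨0, (N : ℚ), 0, 0⟩, ⟨1/2, 0, 1/2, 0⟩, ⟨0, 1/2, 0, 1/2⟩} :
          Set ℍ[ℚ, (p : ℚ), (q : ℚ)]) →
      (1 : ℍ[ℚ, (p : ℚ), (q : ℚ)]) ∈ M ∧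
      (∀ x ∈ M, ∀ y ∈ M, x * y ∈ M) ∧
      Module.Free ℤ M ∧ Module.finrank ℤ M = 4 ∧
      Submodule.span ℚ (M : Set ℍ[ℚ, (p : ℚ), (q : ℚ)]) = ⊤ := by
  intro M rfl
  obtain ⟨k, hk⟩ := hdvd
  have hq : (q : ℚ) = 4 * N * (k : ℤ) + 1 := by
    rw [show q = 4 * (N * k) + 1 by omega]
    push_cast
    ring
  have h := (QuaternionAlgebra.eichlerBasis p q hN.ne').order_span_int_of_mul_eq_sum
    (by simpa [QuaternionAlgebra.coe_eichlerBasis] using QuaternionAlgebra.one_mem_span_eichlerGens)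
    _ (by simpa [QuaternionAlgebra.coe_eichlerBasis] using
      QuaternionAlgebra.eichlerGens_mul (Int.cast_natCast p).symm hq)
  rwa [QuaternionAlgebra.coe_eichlerBasis, QuaternionAlgebra.range_eichlerGens,
    Fintype.card_fin] at h

/-- Let `p, q` be distinct primes with `q ≡ 1 (mod 4)` and `p` a quadratic
residue modulo `q`, and let `N` be a square-free positive integer dividing `(q−1)/4` and
coprime to `p`. The `ℤ`-submodule of the quaternion algebra `(p,q/ℚ)` spanned by `1`, `N·I`,
`(1+J)/2` and `(I+K)/2` contains `1`, is closed under multiplication, and is a free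
`ℤ`-module of rank `4` whose `ℚ`-span is the whole algebra (i.e. it is an order of
`(p,q/ℚ)`). -/
theorem eichler_order_discriminant_pq (p q : ℕ) (hp : p.Prime) (hq : q.Prime) (hpq : p ≠ q)
    (hq4 : q % 4 = 1) (hres : IsSquare (p : ZMod q))
    (N : ℕ) (hN : 0 < N) (hsf : Squarefree N) (hdvd : N ∣ (q - 1) / 4)
    (hcop : Nat.Coprime N p) :
    ∀ M : Submodule ℤ ℍ[ℚ, (p : ℚ), (q : ℚ)],
      M = Submodule.span ℤ
        ({1, ⟨0, (N : ℚ), 0, 0⟩, ⟨1/2, 0, 1/2, 0⟩, ⟨0, 1/2, 0, 1/2⟩} :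
          Set ℍ[ℚ, (p : ℚ), (q : ℚ)]) →
      (1 : ℍ[ℚ, (p : ℚ), (q : ℚ)]) ∈ M ∧
      (∀ x ∈ M, ∀ y ∈ M, x * y ∈ M) ∧
      Module.Free ℤ M ∧ Module.finrank ℤ M = 4 ∧
      Submodule.span ℚ (M : Set ℍ[ℚ, (p : ℚ), (q : ℚ)]) = ⊤ :=
  eichler_order_discriminant_pq_general p q hq4 N hN hdvd
end

section
/- Let Γ¹ and Γ be subgroups of the group of 2×2 real matrices with positive determinant. Let f : ℂ → ℂ satisfy the weight-2 invariance f|₂B = f on ℍ for every B ∈ Γ, and let F be a primitive of f on ℍ. Suppose there is a finite set R ⊆ Γ¹ of coset representatives, i.e. Γ¹ = ⋃_{A ∈ R} (Γ ∩ Γ¹)·A, and a finite set S ⊆ Γ generating Γ as a group. Then the additive subgroup Σ_f of ℂ generated by {F(i) − F(γ·i) : γ ∈ Γ¹} (where i is the imaginary unit) is contained in the additive subgroup of ℂ generated by the finite set {F(i) − F(A·i) : A ∈ R} ∪ {F(i) − F(B·i) : B ∈ S}. In particular, Σ_f is a finitely generated torsion-free abelian group of rank at most |R| + |S|. -/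
open Matrix MatrixGroups

/-- The Möbius action of a real `2×2` matrix on `ℂ`: `A·z = (az+b)/(cz+d)`. -/
noncomputable def moebius (A : Matrix (Fin 2) (Fin 2) ℝ) (z : ℂ) : ℂ :=
  ((A 0 0 : ℂ) * z + (A 0 1 : ℂ)) / ((A 1 0 : ℂ) * z + (A 1 1 : ℂ))

/-- The weight-2 slash of `f : ℂ → ℂ` by `A`: `(f|₂A)(z) = det(A)·(cz+d)⁻²·f(A·z)`. -/
noncomputable def slashTwo (f : ℂ → ℂ) (A : Matrix (Fin 2) (Fin 2) ℝ) (z : ℂ) : ℂ :=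
  (A.det : ℂ) * ((A 1 0 : ℂ) * z + (A 1 1 : ℂ)) ^ (-2 : ℤ) * f (moebius A z)

/-- The underlying `2×2` real matrix of an element of `GL(2,ℝ)⁺`. -/
def matOf (g : Matrix.GLPos (Fin 2) ℝ) : Matrix (Fin 2) (Fin 2) ℝ :=
  ((g : GL (Fin 2) ℝ) : Matrix (Fin 2) (Fin 2) ℝ)

/-! For `B ∈ Γ` the invariance `f|₂B = f` says that `z ↦ F(B·z)` and `F` have the same
derivative on `ℍ`, so `F(B·z) - F(z)` is constant there. Evaluating this constant at `z = γ·i`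
and at `z = i` shows that `φ(γ) = F(i) - F(γ·i)` satisfies `φ(Bγ) = φ(B) + φ(γ)` for `B ∈ Γ`.
Thus `φ` is additive on `Γ`, so `φ(Γ)` lies in the group generated by `φ(S)`, and writing
`γ ∈ Γ¹` as `bA` with `b ∈ Γ`, `A ∈ R` gives `φ(γ) = φ(b) + φ(A)`. The remaining claims hold
for every subgroup of a finitely generated subgroup of `ℂ`. -/

section AddSubgroup

variable {M : Type*} [AddCommGroup M] {H : AddSubgroup M} {T : Set M}

theorem AddSubgroup.fg_of_le_closure (hT : T.Finite) (h : H ≤ AddSubgroup.closure T) : H.FG := by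
  rw [← H.toIntSubmodule_toAddSubgroup, ← Submodule.fg_iff_addSubgroup_fg]
  refine (Submodule.fg_span hT).of_le ?_
  rwa [← Submodule.span_int_eq_addSubgroupClosure] at h

theorem AddSubgroup.rank_le_of_le_closure (h : H ≤ AddSubgroup.closure T) :
    Module.rank ℤ H ≤ Cardinal.mk T := by
  have h' : H.toIntSubmodule ≤ Submodule.span ℤ T := by
    rwa [← Submodule.span_int_eq_addSubgroupClosure] at h
  exact (Submodule.rank_mono h').trans (rank_span_le T)

end AddSubgroup

section AdditiveOnClosure

variable {G M : Type*} [Group G] [AddGroup M] {φ : G → M} {S : Set G}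

theorem map_mem_closure_image_of_mem_closure
    (hφ : ∀ b ∈ Subgroup.closure S, ∀ g, φ (b * g) = φ b + φ g) {b : G}
    (hb : b ∈ Subgroup.closure S) : φ b ∈ AddSubgroup.closure (φ '' S) := by
  have hone : φ 1 = 0 := by simpa using hφ 1 (one_mem _) 1
  induction hb using Subgroup.closure_induction with
  | mem x hx => exact AddSubgroup.subset_closure ⟨x, hx, rfl⟩
  | one => rw [hone]; exact zero_mem _
  | mul x y hx _ ihx ihy => rw [hφ x hx y]; exact add_mem ihx ihy
  | inv x hx ihx =>
    have h := hφ x⁻¹ (inv_mem hx) x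
    rw [inv_mul_cancel, hone, eq_comm] at h
    rw [eq_neg_of_add_eq_zero_left h]
    exact neg_mem ihx

end AdditiveOnClosure

theorem moebius_matOf_eq_coe_smul (g : GLPos (Fin 2) ℝ) (z : UpperHalfPlane) :
    moebius (matOf g) z = ↑(g • z) :=
  (UpperHalfPlane.coe_smul_of_det_pos ((mem_glpos _).mp g.2) z).symm

theorem im_moebius_matOf_pos (g : GLPos (Fin 2) ℝ) {z : ℂ} (hz : 0 < z.im) :
    0 < (moebius (matOf g) z).im := by
  rw [show z = (⟨z, hz⟩ : UpperHalfPlane) from rfl, moebius_matOf_eq_coe_smul]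
  exact UpperHalfPlane.im_pos _

theorem moebius_matOf_mul (g h : GLPos (Fin 2) ℝ) {z : ℂ} (hz : 0 < z.im) :
    moebius (matOf (g * h)) z = moebius (matOf g) (moebius (matOf h) z) := by
  rw [show z = (⟨z, hz⟩ : UpperHalfPlane) from rfl, moebius_matOf_eq_coe_smul,
    moebius_matOf_eq_coe_smul, moebius_matOf_eq_coe_smul, mul_smul]

theorem hasDerivAt_moebius (A : Matrix (Fin 2) (Fin 2) ℝ) {z : ℂ}
    (hz : (A 1 0 : ℂ) * z + A 1 1 ≠ 0) :
    HasDerivAt (moebius A) (A.det / ((A 1 0 : ℂ) * z + A 1 1) ^ 2) z := by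
  have hnum := ((hasDerivAt_id z).const_mul (A 0 0 : ℂ)).add_const (A 0 1 : ℂ)
  have hden := ((hasDerivAt_id z).const_mul (A 1 0 : ℂ)).add_const (A 1 1 : ℂ)
  refine (hnum.div hden hz).congr_deriv ?_
  simp only [id, mul_one, det_fin_two]
  push_cast
  ring

theorem slashTwo_eq_div (f : ℂ → ℂ) (A : Matrix (Fin 2) (Fin 2) ℝ) (z : ℂ) :
    slashTwo f A z = A.det / ((A 1 0 : ℂ) * z + A 1 1) ^ 2 * f (moebius A z) := by
  rw [slashTwo, _root_.zpow_neg, zpow_ofNat, div_eq_mul_inv]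

theorem comp_moebius_sub_eq {f F : ℂ → ℂ} {B : GLPos (Fin 2) ℝ}
    (hinv : ∀ z : ℂ, 0 < z.im → slashTwo f (matOf B) z = f z)
    (hF : ∀ z : ℂ, 0 < z.im → HasDerivAt F (f z) z) {z w : ℂ} (hz : 0 < z.im) (hw : 0 < w.im) :
    F (moebius (matOf B) z) - F z = F (moebius (matOf B) w) - F w := by
  have hderiv : ∀ u ∈ UpperHalfPlane.upperHalfPlaneSet,
      HasDerivAt (fun u => F (moebius (matOf B) u) - F u) 0 u := by
    intro u hu
    have hden := UpperHalfPlane.denom_ne_zero (B : GL (Fin 2) ℝ) ⟨u, hu⟩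
    have h := ((hF _ (im_moebius_matOf_pos B hu)).comp u (hasDerivAt_moebius _ hden)).sub (hF u hu)
    rwa [mul_comm, ← slashTwo_eq_div, hinv u hu, sub_self] at h
  exact UpperHalfPlane.isOpen_upperHalfPlaneSet.is_const_of_deriv_eq_zero
    (convex_halfSpace_im_gt 0).isPreconnected
    (fun u hu => (hderiv u hu).differentiableAt.differentiableWithinAt)
    (fun u hu => (hderiv u hu).deriv) hz hw

noncomputable def period (F : ℂ → ℂ) (z₀ : ℂ) (g : GLPos (Fin 2) ℝ) : ℂ :=
  F z₀ - F (moebius (matOf g) z₀)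

theorem period_mul {f F : ℂ → ℂ} {z₀ : ℂ} (hz₀ : 0 < z₀.im) {B : GLPos (Fin 2) ℝ}
    (hinv : ∀ z : ℂ, 0 < z.im → slashTwo f (matOf B) z = f z)
    (hF : ∀ z : ℂ, 0 < z.im → HasDerivAt F (f z) z) (g : GLPos (Fin 2) ℝ) :
    period F z₀ (B * g) = period F z₀ B + period F z₀ g := by
  have h := comp_moebius_sub_eq hinv hF (im_moebius_matOf_pos g hz₀) hz₀
  rw [period, period, period, moebius_matOf_mul B g hz₀]
  linear_combination -h

theorem modular_integral_values_finitely_generated_general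
    (Γ1 Γ : Subgroup (Matrix.GLPos (Fin 2) ℝ)) (f F : ℂ → ℂ)
    (hinv : ∀ B ∈ Γ, ∀ z : ℂ, 0 < z.im → slashTwo f (matOf B) z = f z)
    (hF : ∀ z : ℂ, 0 < z.im → HasDerivAt F (f z) z)
    (R S : Finset (Matrix.GLPos (Fin 2) ℝ))
    (hcoset : ∀ g ∈ Γ1, ∃ A ∈ R, ∃ b, b ∈ Γ ∧ b ∈ Γ1 ∧ g = b * A)
    (hgen : Subgroup.closure (S : Set (Matrix.GLPos (Fin 2) ℝ)) = Γ) :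
    AddSubgroup.closure {c : ℂ | ∃ γ ∈ Γ1, c = F Complex.I - F (moebius (matOf γ) Complex.I)} ≤
      AddSubgroup.closure
        ((fun A => F Complex.I - F (moebius (matOf A) Complex.I)) ''
          ((R : Set (Matrix.GLPos (Fin 2) ℝ)) ∪ (S : Set (Matrix.GLPos (Fin 2) ℝ)))) ∧
    (AddSubgroup.closure
      {c : ℂ | ∃ γ ∈ Γ1, c = F Complex.I - F (moebius (matOf γ) Complex.I)}).FG ∧
    (∀ (n : ℕ) (x : ℂ),
      x ∈ AddSubgroup.closure
        {c : ℂ | ∃ γ ∈ Γ1, c = F Complex.I - F (moebius (matOf γ) Complex.I)} →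
      n • x = 0 → n = 0 ∨ x = 0) ∧
    Module.rank ℤ
      (AddSubgroup.closure
        {c : ℂ | ∃ γ ∈ Γ1, c = F Complex.I - F (moebius (matOf γ) Complex.I)}) ≤
      ((R.card + S.card : ℕ) : Cardinal) := by
  have hI : 0 < Complex.I.im := by simp
  have hmul : ∀ B ∈ Γ, ∀ g,
      period F Complex.I (B * g) = period F Complex.I B + period F Complex.I g :=
    fun B hB => period_mul hI (hinv B hB) hF
  have hle : AddSubgroup.closure {c : ℂ | ∃ γ ∈ Γ1, c = period F Complex.I γ} ≤
      AddSubgroup.closure (period F Complex.I '' (R ∪ S)) := by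
    rw [AddSubgroup.closure_le]
    rintro _ ⟨γ, hγ, rfl⟩
    obtain ⟨A, hA, b, hb, -, rfl⟩ := hcoset γ hγ
    rw [SetLike.mem_coe, hmul b hb A]
    refine add_mem (AddSubgroup.closure_mono (Set.image_mono Set.subset_union_right) ?_)
      (AddSubgroup.subset_closure ⟨A, Or.inl hA, rfl⟩)
    exact map_mem_closure_image_of_mem_closure (hgen ▸ hmul) (hgen ▸ hb)
  refine ⟨hle, AddSubgroup.fg_of_le_closure ((R.finite_toSet.union S.finite_toSet).image _) hle,
    fun n x _ => smul_eq_zero.mp, (AddSubgroup.rank_le_of_le_closure hle).trans ?_⟩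
  calc Cardinal.mk (period F Complex.I '' ((R : Set (GLPos (Fin 2) ℝ)) ∪ S))
      _ ≤ Cardinal.mk ↥((R : Set (GLPos (Fin 2) ℝ)) ∪ S) := Cardinal.mk_image_le
      _ ≤ Cardinal.mk (R : Set (GLPos (Fin 2) ℝ)) + Cardinal.mk (S : Set (GLPos (Fin 2) ℝ)) :=
        Cardinal.mk_union_le _ _
      _ = ((R.card + S.card : ℕ) : Cardinal) := by simp

/-- Let `Γ¹, Γ` be subgroups of the group of `2×2` real matrices with
positive determinant, `f` weight-2 invariant under `Γ` with primitive `F` on `ℍ`, `R ⊆ Γ¹`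
a finite set of coset representatives for `(Γ ∩ Γ¹)\Γ¹` and `S ⊆ Γ` a finite generating set
of `Γ`. Then the additive subgroup `Σ_f` of `ℂ` generated by `{F(i) − F(γ·i) : γ ∈ Γ¹}` is
contained in the additive subgroup generated by the finitely many values at `R ∪ S`; in
particular `Σ_f` is a finitely generated torsion-free abelian group of rank at most
`|R| + |S|`. -/
theorem modular_integral_values_finitely_generated
    (Γ1 Γ : Subgroup (Matrix.GLPos (Fin 2) ℝ)) (f F : ℂ → ℂ)
    (hinv : ∀ B ∈ Γ, ∀ z : ℂ, 0 < z.im → slashTwo f (matOf B) z = f z)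
    (hF : ∀ z : ℂ, 0 < z.im → HasDerivAt F (f z) z)
    (R S : Finset (Matrix.GLPos (Fin 2) ℝ))
    (hR : (R : Set (Matrix.GLPos (Fin 2) ℝ)) ⊆ (Γ1 : Set (Matrix.GLPos (Fin 2) ℝ)))
    (hcoset : ∀ g ∈ Γ1, ∃ A ∈ R, ∃ b, b ∈ Γ ∧ b ∈ Γ1 ∧ g = b * A)
    (hS : (S : Set (Matrix.GLPos (Fin 2) ℝ)) ⊆ (Γ : Set (Matrix.GLPos (Fin 2) ℝ)))
    (hgen : Subgroup.closure (S : Set (Matrix.GLPos (Fin 2) ℝ)) = Γ) :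
    AddSubgroup.closure {c : ℂ | ∃ γ ∈ Γ1, c = F Complex.I - F (moebius (matOf γ) Complex.I)} ≤
      AddSubgroup.closure
        ((fun A => F Complex.I - F (moebius (matOf A) Complex.I)) ''
          ((R : Set (Matrix.GLPos (Fin 2) ℝ)) ∪ (S : Set (Matrix.GLPos (Fin 2) ℝ)))) ∧
    (AddSubgroup.closure
      {c : ℂ | ∃ γ ∈ Γ1, c = F Complex.I - F (moebius (matOf γ) Complex.I)}).FG ∧
    (∀ (n : ℕ) (x : ℂ),
      x ∈ AddSubgroup.closure
        {c : ℂ | ∃ γ ∈ Γ1, c = F Complex.I - F (moebius (matOf γ) Complex.I)} →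
      n • x = 0 → n = 0 ∨ x = 0) ∧
    Module.rank ℤ
      (AddSubgroup.closure
        {c : ℂ | ∃ γ ∈ Γ1, c = F Complex.I - F (moebius (matOf γ) Complex.I)}) ≤
      ((R.card + S.card : ℕ) : Cardinal) :=
  modular_integral_values_finitely_generated_general Γ1 Γ f F hinv hF R S hcoset hgen
end
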